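/- Fix R2 ≥ 0, pmfs Q1 on 𝒳1 and Q2 on 𝒳2, and a channel q1 with q1(y|x1,x2) > 0 for all arguments. Then at R1 = 0 the benchmark exponent is dominated by the optimized new exponent: E_{B,1}(0, R2) ≤ sup_{(ρ,λ)∈[0,1]²} E_{R,1}(0, R2, Q1, Q2, ρ, λ). -/

import Mathlib

open Finset

section InfoDefs

variable {Ω : Type*} [Fintype Ω]

/-- A probability mass function on a finite type. -/
def IsPMF {α : Type*} [Fintype α] (p : α → ℝ) : Prop :=
  (∀ a, 0 ≤ p a) ∧ ∑ a, p a = 1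

/-- Pushforward of `P` along `f` (the pmf of the random variable `f`). -/
noncomputable def pushf {α : Type*} [Fintype α] [DecidableEq α]
    (P : Ω → ℝ) (f : Ω → α) (a : α) : ℝ :=
  ∑ ω, if f ω = a then P ω else 0

/-- Entropy of the random variable `f` under `P`. -/
noncomputable def entH {α : Type*} [Fintype α] [DecidableEq α]
    (P : Ω → ℝ) (f : Ω → α) : ℝ :=
  -∑ a, pushf P f a * Real.log (pushf P f a)

/-- Conditional entropy `H(g | f)` under `P`. -/
noncomputable def condEnt {α β : Type*} [Fintype α] [DecidableEq α] [Fintype β] [DecidableEq β]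
    (P : Ω → ℝ) (f : Ω → α) (g : Ω → β) : ℝ :=
  -∑ a, ∑ b, pushf P (fun ω => (f ω, g ω)) (a, b) *
      Real.log (pushf P (fun ω => (f ω, g ω)) (a, b) / pushf P f a)

/-- Mutual information `I(f;g)` under `P`. -/
noncomputable def mutI {α β : Type*} [Fintype α] [DecidableEq α] [Fintype β] [DecidableEq β]
    (P : Ω → ℝ) (f : Ω → α) (g : Ω → β) : ℝ :=
  ∑ a, ∑ b, pushf P (fun ω => (f ω, g ω)) (a, b) *
      Real.log (pushf P (fun ω => (f ω, g ω)) (a, b) / (pushf P f a * pushf P g b))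

/-- Conditional mutual information `I(f;g|h)` under `P`. -/
noncomputable def condMutI {α β γ : Type*} [Fintype α] [DecidableEq α] [Fintype β]
    [DecidableEq β] [Fintype γ] [DecidableEq γ]
    (P : Ω → ℝ) (f : Ω → α) (g : Ω → β) (h : Ω → γ) : ℝ :=
  ∑ a, ∑ b, ∑ c, pushf P (fun ω => (f ω, g ω, h ω)) (a, b, c) *
      Real.log (pushf P (fun ω => (f ω, g ω, h ω)) (a, b, c) * pushf P h c /
        (pushf P (fun ω => (f ω, h ω)) (a, c) * pushf P (fun ω => (g ω, h ω)) (b, c)))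

end InfoDefs
section IFC

variable {X1 X2 Y1 : Type*} [Fintype X1] [DecidableEq X1] [Fintype X2] [DecidableEq X2]
  [Fintype Y1] [DecidableEq Y1]

/-- The function `g(ρ,λ,P,P')`. -/
noncomputable def gFun (q1 : X1 → X2 → Y1 → ℝ) (ρ lam : ℝ)
    (P P' : X1 × X2 × Y1 → ℝ) : ℝ :=
  -(1 - ρ * lam) * (∑ z, P z * Real.log (q1 z.1 z.2.1 z.2.2))
    - ρ * lam * (∑ z, P' z * Real.log (q1 z.1 z.2.1 z.2.2))

/-- The function `f1(ρ,λ,P,P')`. -/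
noncomputable def f1Fun (q1 : X1 → X2 → Y1 → ℝ) (R2 ρ lam : ℝ)
    (P P' : X1 × X2 × Y1 → ℝ) : ℝ :=
  gFun q1 ρ lam P P'
    - condEnt P (fun z => z.1) (fun z => z.2.2)
    + ρ * mutI P' (fun z => z.1) (fun z => z.2.2)
    + max (mutI P (fun z => z.2.1) (fun z => (z.1, z.2.2)) - R2)
        ((1 - ρ * lam) * (mutI P (fun z => z.2.1) (fun z => (z.1, z.2.2)) - R2))
    + max (max ((1 - ρ) * mutI P' (fun z => z.2.1) (fun z => z.2.2)
            + ρ * mutI P' (fun z => z.2.1) (fun z => (z.1, z.2.2)) - R2)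
          (ρ * (mutI P' (fun z => z.2.1) (fun z => (z.1, z.2.2)) - R2)))
        (ρ * lam * (mutI P' (fun z => z.2.1) (fun z => (z.1, z.2.2)) - R2))

/-- The function `f2(ρ,λ,P,P')`. -/
noncomputable def f2Fun (q1 : X1 → X2 → Y1 → ℝ) (R2 ρ lam : ℝ)
    (P P' : X1 × X2 × Y1 → ℝ) : ℝ :=
  gFun q1 ρ lam P P'
    - condEnt P (fun z => z.1) (fun z => z.2.2)
    + ρ * mutI P' (fun z => z.1) (fun z => (z.2.1, z.2.2))
    + mutI P (fun z => z.2.1) (fun z => (z.1, z.2.2)) - R2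

/-- The constraint set `S1(Q1,Q2)`. -/
def S1set (Y1 : Type*) [Fintype Y1] [DecidableEq Y1] (Q1 : X1 → ℝ) (Q2 : X2 → ℝ) :
    Set ((X1 × X2 × Y1 → ℝ) × (X1 × X2 × Y1 → ℝ)) :=
  {PP | IsPMF PP.1 ∧ IsPMF PP.2 ∧
    pushf PP.1 (fun z => z.2.2) = pushf PP.2 (fun z => z.2.2) ∧
    pushf PP.1 (fun z => z.1) = Q1 ∧ pushf PP.2 (fun z => z.1) = Q1 ∧
    pushf PP.1 (fun z => z.2.1) = Q2 ∧ pushf PP.2 (fun z => z.2.1) = Q2}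

/-- The constraint set `S2(Q1,Q2,R2)`. -/
def S2set (Y1 : Type*) [Fintype Y1] [DecidableEq Y1] (Q1 : X1 → ℝ) (Q2 : X2 → ℝ) (R2 : ℝ) :
    Set ((X1 × X2 × Y1 → ℝ) × (X1 × X2 × Y1 → ℝ)) :=
  {PP | IsPMF PP.1 ∧ IsPMF PP.2 ∧
    pushf PP.1 (fun z => z.1) = Q1 ∧ pushf PP.2 (fun z => z.1) = Q1 ∧
    pushf PP.1 (fun z => z.2.1) = Q2 ∧ pushf PP.2 (fun z => z.2.1) = Q2 ∧
    R2 ≤ mutI PP.1 (fun z => z.2.1) (fun z => z.2.2) ∧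
    pushf PP.1 (fun z => (z.2.1, z.2.2)) = pushf PP.2 (fun z => (z.2.1, z.2.2))}

/-- The error exponent `E_{R,1}(R1,R2,Q1,Q2,ρ,λ)` (with `+∞` for infima over empty sets). -/
noncomputable def ER1 (q1 : X1 → X2 → Y1 → ℝ) (R1 R2 : ℝ) (Q1 : X1 → ℝ) (Q2 : X2 → ℝ)
    (ρ lam : ℝ) : EReal :=
  ((R2 - ρ * R1 : ℝ) : EReal) +
    min (⨅ PP : S1set Y1 Q1 Q2, ((f1Fun q1 R2 ρ lam PP.1.1 PP.1.2 : ℝ) : EReal))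
        (⨅ PP : S2set Y1 Q1 Q2 R2, ((f2Fun q1 R2 ρ lam PP.1.1 PP.1.2 : ℝ) : EReal))

end IFC

section Benchmark

variable {X1 X2 Y1 : Type*} [Fintype X1] [DecidableEq X1] [Fintype X2] [DecidableEq X2]
  [Fintype Y1] [DecidableEq Y1]

/-- The conditional relative entropy `D(P_{Ŷ1|X̂1,X̂2} ‖ q1 | P_{X̂1,X̂2})`. -/
noncomputable def Dq (q1 : X1 → X2 → Y1 → ℝ) (P : X1 × X2 × Y1 → ℝ) : ℝ :=
  ∑ z, P z * Real.log (P z /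
    (pushf P (fun w => (w.1, w.2.1)) (z.1, z.2.1) * q1 z.1 z.2.1 z.2.2))

/-- The set `𝒫(Q1,Q2)` of joint pmfs on `X1 × X2 × Y1` with the prescribed marginals. -/
def Pset (Y1 : Type*) [Fintype Y1] [DecidableEq Y1] {X1 X2 : Type*}
    [Fintype X1] [DecidableEq X1] [Fintype X2] [DecidableEq X2]
    (Q1 : X1 → ℝ) (Q2 : X2 → ℝ) : Set (X1 × X2 × Y1 → ℝ) :=
  {P | IsPMF P ∧ pushf P (fun z => z.1) = Q1 ∧ pushf P (fun z => z.2.1) = Q2}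

/-- The benchmark exponent `E_{1,2}(R1,R2)`. -/
noncomputable def E12 (q1 : X1 → X2 → Y1 → ℝ) (Q1 : X1 → ℝ) (Q2 : X2 → ℝ)
    (R1 R2 : ℝ) : EReal :=
  ⨅ P : Pset Y1 Q1 Q2,
    ((Dq q1 P.1 + mutI P.1 (fun z => z.1) (fun z => z.2.1)
      + max (mutI P.1 (fun z => z.1) (fun z => z.2.2)
          + mutI P.1 (fun z => z.2.1) (fun z => (z.1, z.2.2)) - R1 - R2) 0 : ℝ) : EReal)

/-- The benchmark exponent `E_{1|2}(R1)`. -/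
noncomputable def E1g2 (q1 : X1 → X2 → Y1 → ℝ) (Q1 : X1 → ℝ) (Q2 : X2 → ℝ)
    (R1 : ℝ) : EReal :=
  ⨅ P : Pset Y1 Q1 Q2,
    ((Dq q1 P.1 + mutI P.1 (fun z => z.1) (fun z => z.2.1)
      + max (mutI P.1 (fun z => z.1) (fun z => (z.2.1, z.2.2)) - R1) 0 : ℝ) : EReal)

/-- The benchmark exponent `E_1(R1)`. -/
noncomputable def E1only (q1 : X1 → X2 → Y1 → ℝ) (Q1 : X1 → ℝ) (Q2 : X2 → ℝ)
    (R1 : ℝ) : EReal :=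
  ⨅ P : Pset Y1 Q1 Q2,
    ((Dq q1 P.1 + mutI P.1 (fun z => z.1) (fun z => z.2.1)
      + max (mutI P.1 (fun z => z.1) (fun z => z.2.2) - R1) 0 : ℝ) : EReal)

/-- The benchmark exponent `E_{B,1}(R1,R2)`. -/
noncomputable def EB1 (q1 : X1 → X2 → Y1 → ℝ) (Q1 : X1 → ℝ) (Q2 : X2 → ℝ)
    (R1 R2 : ℝ) : EReal :=
  max (E1only q1 Q1 Q2 R1) (min (E12 q1 Q1 Q2 R1 R2) (E1g2 q1 Q1 Q2 R1))

end Benchmark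


/-!
Take `ρ = 1` and `λ = 1/2`. For `(P, P')` in `S1` or `S2`, the midpoint `M = (P + P') / 2` lies
in `𝒫(Q1, Q2)` and is the witness for the benchmark infima. Expanding every information quantity
into entropies of marginals, `R2 + f1(1, 1/2, P, P')` dominates, and `R2 + f2(1, 1/2, P, P')`
equals, the average over `P` and `P'` of `lowerF1` resp. `lowerF2`, which are built from the
benchmark integrands. Once the marginals fixed by `S1` resp. `S2` are held constant,
`D + I(X̂1;X̂2)`, `I(X̂1;Ŷ1)`, `I(X̂1;Ŷ1) + I(X̂2;(X̂1,Ŷ1))` and `I(X̂1;(X̂2,Ŷ1))` are each a constant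
minus a joint entropy, so concavity of entropy bounds the integrands at `M` by that average.
The remaining input, `I(X̂1;Ŷ1) ≤ I(X̂1;(X̂2,Ŷ1))` for `E_1` on `S2`, is submodularity of entropy.
-/

open Real Function

section Pushforward

variable {Ω α β : Type*} [Fintype Ω] [Fintype α] [DecidableEq α] [Fintype β] [DecidableEq β]
  {P P' : Ω → ℝ}

lemma pushf_nonneg (hP : ∀ ω, 0 ≤ P ω) (f : Ω → α) (a : α) : 0 ≤ pushf P f a :=
  sum_nonneg fun ω _ => by split_ifs <;> simp [hP ω]

lemma le_pushf_apply (hP : ∀ ω, 0 ≤ P ω) (f : Ω → α) (ω : Ω) :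
    P ω ≤ pushf P f (f ω) := by
  have := single_le_sum (f := fun ω' => if f ω' = f ω then P ω' else 0)
    (fun ω' _ => by split_ifs <;> simp [hP ω']) (mem_univ ω)
  simpa [pushf] using this

lemma pushf_apply_pos (hP : ∀ ω, 0 ≤ P ω) (f : Ω → α) {ω : Ω} (hω : P ω ≠ 0) :
    0 < pushf P f (f ω) :=
  (lt_of_le_of_ne (hP ω) (Ne.symm hω)).trans_le (le_pushf_apply hP f ω)

lemma sum_pushf_mul (f : Ω → α) (c : α → ℝ) :
    ∑ a, pushf P f a * c a = ∑ ω, P ω * c (f ω) := by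
  simp only [pushf, sum_mul, ite_mul, zero_mul]
  rw [sum_comm]
  simp

lemma sum_pushf (f : Ω → α) : ∑ a, pushf P f a = ∑ ω, P ω := by
  simpa using sum_pushf_mul (P := P) f fun _ => 1

lemma pushf_id_apply [DecidableEq Ω] (ω : Ω) : pushf P id ω = P ω := by
  simp [pushf]

lemma pushf_comp_apply_of_injective {e : α → β} (he : Injective e) (f : Ω → α) (a : α) :
    pushf P (fun ω => e (f ω)) (e a) = pushf P f a := by
  simp only [pushf, he.eq_iff]

lemma sum_pushf_pair_left (f : Ω → α) (g : Ω → β) (b : β) :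
    ∑ a, pushf P (fun ω => (f ω, g ω)) (a, b) = pushf P g b := by
  simp only [pushf, Prod.mk.injEq]
  rw [sum_comm]
  refine sum_congr rfl fun ω _ => ?_
  by_cases hg : g ω = b <;> simp [hg]

lemma pushf_midpoint (f : Ω → α) (a : α) :
    pushf (fun ω => (P ω + P' ω) / 2) f a = (pushf P f a + pushf P' f a) / 2 := by
  simp only [pushf, ← sum_add_distrib, sum_div]
  refine sum_congr rfl fun ω _ => ?_
  split_ifs <;> simp

lemma pushf_midpoint_of_eq {f : Ω → α} (h : pushf P f = pushf P' f) :
    pushf (fun ω => (P ω + P' ω) / 2) f = pushf P f := by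
  funext a
  rw [pushf_midpoint, h, add_self_div_two]

lemma IsPMF.midpoint (hP : IsPMF P) (hP' : IsPMF P') : IsPMF fun ω => (P ω + P' ω) / 2 :=
  ⟨fun ω => div_nonneg (add_nonneg (hP.1 ω) (hP'.1 ω)) zero_le_two, by
    rw [← sum_div, sum_add_distrib, hP.2, hP'.2]; norm_num⟩

end Pushforward

section Entropy

variable {Ω α β γ : Type*} [Fintype Ω] [Fintype α] [DecidableEq α] [Fintype β]
  [DecidableEq β] [Fintype γ] [DecidableEq γ] {P P' : Ω → ℝ}

lemma sum_mul_log_div {u v : Ω → ℝ} (hu : ∀ ω, P ω ≠ 0 → u ω ≠ 0)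
    (hv : ∀ ω, P ω ≠ 0 → v ω ≠ 0) :
    ∑ ω, P ω * log (u ω / v ω) = ∑ ω, P ω * log (u ω) - ∑ ω, P ω * log (v ω) := by
  rw [← sum_sub_distrib]
  refine sum_congr rfl fun ω _ => ?_
  by_cases hω : P ω = 0
  · simp [hω]
  · rw [log_div (hu ω hω) (hv ω hω), mul_sub]

lemma sum_mul_log_mul {u v : Ω → ℝ} (hu : ∀ ω, P ω ≠ 0 → u ω ≠ 0)
    (hv : ∀ ω, P ω ≠ 0 → v ω ≠ 0) :
    ∑ ω, P ω * log (u ω * v ω) = ∑ ω, P ω * log (u ω) + ∑ ω, P ω * log (v ω) := by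
  rw [← sum_add_distrib]
  refine sum_congr rfl fun ω _ => ?_
  by_cases hω : P ω = 0
  · simp [hω]
  · rw [log_mul (hu ω hω) (hv ω hω), mul_add]

lemma entH_eq_sum (f : Ω → α) : entH P f = -∑ ω, P ω * log (pushf P f (f ω)) := by
  rw [entH, sum_pushf_mul f fun a => log (pushf P f a)]

lemma entH_id [DecidableEq Ω] : entH P id = -∑ ω, P ω * log (P ω) := by
  simp only [entH_eq_sum, id, pushf_id_apply]

lemma entH_comp_of_injective {e : α → β} (he : Injective e) (f : Ω → α) :
    entH P (fun ω => e (f ω)) = entH P f := by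
  simp only [entH_eq_sum, pushf_comp_apply_of_injective he]

lemma entH_eq_of_pushf_eq {f : Ω → α} (h : pushf P f = pushf P' f) : entH P f = entH P' f := by
  rw [entH, entH, h]

lemma entH_midpoint_of_pushf_eq {f : Ω → α} (h : pushf P f = pushf P' f) :
    entH (fun ω => (P ω + P' ω) / 2) f = entH P f := by
  rw [entH, entH, pushf_midpoint_of_eq h]

lemma mutI_eq_entH (hP : ∀ ω, 0 ≤ P ω) (f : Ω → α) (g : Ω → β) :
    mutI P f g = entH P f + entH P g - entH P (fun ω => (f ω, g ω)) := by
  have hsum : mutI P f g = ∑ ω, P ω * log (pushf P (fun ω => (f ω, g ω)) (f ω, g ω) /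
      (pushf P f (f ω) * pushf P g (g ω))) := by
    rw [mutI, ← Fintype.sum_prod_type', sum_pushf_mul (fun ω => (f ω, g ω)) fun ab =>
      log (pushf P (fun ω => (f ω, g ω)) ab / (pushf P f ab.1 * pushf P g ab.2))]
  rw [hsum, sum_mul_log_div (fun _ hω => (pushf_apply_pos hP _ hω).ne')
      fun _ hω => mul_ne_zero (pushf_apply_pos hP f hω).ne' (pushf_apply_pos hP g hω).ne',
    sum_mul_log_mul (fun _ hω => (pushf_apply_pos hP f hω).ne')
      fun _ hω => (pushf_apply_pos hP g hω).ne',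
    entH_eq_sum, entH_eq_sum, entH_eq_sum]
  ring

lemma condEnt_eq_entH (hP : ∀ ω, 0 ≤ P ω) (f : Ω → α) (g : Ω → β) :
    condEnt P f g = entH P (fun ω => (f ω, g ω)) - entH P f := by
  have hsum : condEnt P f g = -∑ ω, P ω * log (pushf P (fun ω => (f ω, g ω)) (f ω, g ω) /
      pushf P f (f ω)) := by
    rw [condEnt, ← Fintype.sum_prod_type', sum_pushf_mul (fun ω => (f ω, g ω)) fun ab =>
      log (pushf P (fun ω => (f ω, g ω)) ab / pushf P f ab.1)]
  rw [hsum, sum_mul_log_div (fun _ hω => (pushf_apply_pos hP _ hω).ne')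
      fun _ hω => (pushf_apply_pos hP f hω).ne',
    entH_eq_sum, entH_eq_sum]
  ring

lemma entH_eq_sum_negMulLog (f : Ω → α) : entH P f = ∑ a, negMulLog (pushf P f a) := by
  simp [entH, negMulLog]

lemma entH_midpoint_ge (hP : ∀ ω, 0 ≤ P ω) (hP' : ∀ ω, 0 ≤ P' ω) (f : Ω → α) :
    (entH P f + entH P' f) / 2 ≤ entH (fun ω => (P ω + P' ω) / 2) f := by
  simp only [entH_eq_sum_negMulLog, pushf_midpoint, ← sum_add_distrib, sum_div]
  refine sum_le_sum fun a _ => ?_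
  have := concaveOn_negMulLog.2 (pushf_nonneg hP f a) (pushf_nonneg hP' f a)
    (by norm_num : (0 : ℝ) ≤ 1 / 2) (by norm_num : (0 : ℝ) ≤ 1 / 2) (by norm_num)
  simp only [smul_eq_mul] at this
  convert this using 2 <;> ring

lemma mutI_midpoint_le (hP : ∀ ω, 0 ≤ P ω) (hP' : ∀ ω, 0 ≤ P' ω) {f : Ω → α}
    {g : Ω → β} (hf : pushf P f = pushf P' f) (hg : pushf P g = pushf P' g) :
    mutI (fun ω => (P ω + P' ω) / 2) f g ≤ (mutI P f g + mutI P' f g) / 2 := by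
  rw [mutI_eq_entH hP, mutI_eq_entH hP', mutI_eq_entH fun ω => by linarith [hP ω, hP' ω],
    entH_midpoint_of_pushf_eq hf, entH_midpoint_of_pushf_eq hg, entH_eq_of_pushf_eq hf,
    entH_eq_of_pushf_eq hg]
  linarith [entH_midpoint_ge hP hP' fun ω => (f ω, g ω)]

lemma mutI_add_mutI_pair_midpoint_le (hP : ∀ ω, 0 ≤ P ω) (hP' : ∀ ω, 0 ≤ P' ω)
    {f : Ω → α} {g : Ω → β} {h : Ω → γ} (hf : pushf P f = pushf P' f)
    (hg : pushf P g = pushf P' g) (hh : pushf P h = pushf P' h) :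
    mutI (fun ω => (P ω + P' ω) / 2) f h
        + mutI (fun ω => (P ω + P' ω) / 2) g (fun ω => (f ω, h ω))
      ≤ (mutI P f h + mutI P g (fun ω => (f ω, h ω))
        + (mutI P' f h + mutI P' g (fun ω => (f ω, h ω)))) / 2 := by
  have hM : ∀ ω, 0 ≤ (P ω + P' ω) / 2 := fun ω => by linarith [hP ω, hP' ω]
  rw [mutI_eq_entH hM, mutI_eq_entH hM, mutI_eq_entH hP, mutI_eq_entH hP, mutI_eq_entH hP',
    mutI_eq_entH hP', entH_midpoint_of_pushf_eq hf, entH_midpoint_of_pushf_eq hg,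
    entH_midpoint_of_pushf_eq hh, entH_eq_of_pushf_eq hf, entH_eq_of_pushf_eq hg,
    entH_eq_of_pushf_eq hh]
  linarith [entH_midpoint_ge hP hP' fun ω => (g ω, f ω, h ω)]

end Entropy

section Submodularity

variable {Ω α β γ : Type*} [Fintype Ω] [Fintype α] [DecidableEq α] [Fintype β]
  [DecidableEq β] [Fintype γ] [DecidableEq γ] {P : Ω → ℝ}

-- `p(a, c) p(b, c) / p(c)` is the coupling of `f` and `g` conditionally independent given `h`.
lemma sum_pushf_mul_pushf_div_le (hP : ∀ ω, 0 ≤ P ω) (f : Ω → α) (g : Ω → β)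
    (h : Ω → γ) :
    ∑ x : α × β × γ, pushf P (fun ω => (f ω, h ω)) (x.1, x.2.2)
      * pushf P (fun ω => (g ω, h ω)) x.2 / pushf P h x.2.2 ≤ ∑ ω, P ω := by
  calc _ = ∑ y : β × γ,
        pushf P (fun ω => (g ω, h ω)) y * (pushf P h y.2 / pushf P h y.2) := by
        rw [Fintype.sum_prod_type_right]
        refine sum_congr rfl fun y _ => ?_
        dsimp only
        rw [← sum_div, ← sum_mul, sum_pushf_pair_left]
        ring
    _ ≤ ∑ y, pushf P (fun ω => (g ω, h ω)) y :=
        sum_le_sum fun y _ => mul_le_of_le_one_right (pushf_nonneg hP _ _) (div_self_le_one _)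
    _ = ∑ ω, P ω := sum_pushf _

lemma entH_triple_add_entH_le (hP : ∀ ω, 0 ≤ P ω) (f : Ω → α) (g : Ω → β)
    (h : Ω → γ) :
    entH P (fun ω => (f ω, g ω, h ω)) + entH P h ≤
      entH P (fun ω => (f ω, h ω)) + entH P (fun ω => (g ω, h ω)) := by
  set pfgh := pushf P fun ω => (f ω, g ω, h ω)
  set pfh := pushf P fun ω => (f ω, h ω)
  set pgh := pushf P fun ω => (g ω, h ω)
  set ph := pushf P h
  set r : α × β × γ → ℝ := fun x => pfh (x.1, x.2.2) * pgh x.2 / (pfgh x * ph x.2.2)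
  have hgibbs : ∀ ω, P ω * (1 - r (f ω, g ω, h ω)) ≤ P ω * (log (pfgh (f ω, g ω, h ω))
      + log (ph (h ω)) - log (pfh (f ω, h ω)) - log (pgh (g ω, h ω))) := by
    intro ω
    by_cases hω : P ω = 0
    · simp [hω]
    refine mul_le_mul_of_nonneg_left ?_ (hP ω)
    have h1 := pushf_apply_pos hP (fun ω => (f ω, g ω, h ω)) hω
    have h2 := pushf_apply_pos hP h hω
    have h3 := pushf_apply_pos hP (fun ω => (f ω, h ω)) hω
    have h4 := pushf_apply_pos hP (fun ω => (g ω, h ω)) hω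
    have := one_sub_inv_le_log_of_pos (x := pfgh (f ω, g ω, h ω) * ph (h ω) /
      (pfh (f ω, h ω) * pgh (g ω, h ω))) (by positivity)
    rw [inv_div, log_div (by positivity) (by positivity), log_mul h1.ne' h2.ne',
      log_mul h3.ne' h4.ne'] at this
    simp only [r]
    linarith
  have hmass : ∑ ω, P ω * r (f ω, g ω, h ω) ≤ ∑ ω, P ω := by
    rw [← sum_pushf_mul (fun ω => (f ω, g ω, h ω)) r]
    refine (sum_le_sum fun x _ => ?_).trans (sum_pushf_mul_pushf_div_le hP f g h)
    change pfgh x * r x ≤ pfh (x.1, x.2.2) * pgh x.2 / ph x.2.2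
    by_cases hx : pfgh x = 0
    · rw [hx, zero_mul]
      exact div_nonneg (mul_nonneg (pushf_nonneg hP _ _) (pushf_nonneg hP _ _))
        (pushf_nonneg hP _ _)
    · rw [← mul_div_assoc, mul_div_mul_left _ _ hx]
  have := sum_le_sum fun ω (_ : ω ∈ univ) => hgibbs ω
  simp only [mul_sub, mul_add, mul_one, sum_sub_distrib, sum_add_distrib] at this
  rw [entH_eq_sum, entH_eq_sum, entH_eq_sum, entH_eq_sum]
  linarith

lemma entH_pair_le (hP : IsPMF P) (f : Ω → α) (g : Ω → β) :
    entH P (fun ω => (f ω, g ω)) ≤ entH P f + entH P g := by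
  have h := entH_triple_add_entH_le hP.1 f g fun _ => ()
  have hunit : entH P (fun _ => ()) = 0 := by simp [entH, pushf, hP.2]
  rwa [hunit, add_zero, entH_comp_of_injective (e := fun a : α × β => (a.1, a.2, ()))
      (fun a b hab => by simpa [Prod.ext_iff] using hab) fun ω => (f ω, g ω),
    entH_comp_of_injective (Prod.mk_left_injective ()),
    entH_comp_of_injective (Prod.mk_left_injective ())] at h

lemma mutI_nonneg (hP : IsPMF P) (f : Ω → α) (g : Ω → β) : 0 ≤ mutI P f g := by
  rw [mutI_eq_entH hP.1]
  linarith [entH_pair_le hP f g]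

lemma mutI_le_mutI_pair (hP : ∀ ω, 0 ≤ P ω) (f : Ω → α) (g : Ω → β) (h : Ω → γ) :
    mutI P f h ≤ mutI P f fun ω => (g ω, h ω) := by
  rw [mutI_eq_entH hP, mutI_eq_entH hP]
  linarith [entH_triple_add_entH_le hP f g h]

end Submodularity

lemma add_max_zero_div_two_le {x m : ℝ} (h1 : x ≤ m) (h2 : x / 2 ≤ m) :
    (x + max x 0) / 2 ≤ m := by
  rcases le_total x 0 with hx | hx
  · rw [max_eq_right hx]; linarith
  · rw [max_eq_left hx]; linarith

section Channel

variable {X1 X2 Y1 : Type*} [Fintype X1] [Fintype X2] [Fintype Y1] {q1 : X1 → X2 → Y1 → ℝ}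
  {P P' : X1 × X2 × Y1 → ℝ}

noncomputable def logLik (q1 : X1 → X2 → Y1 → ℝ) (P : X1 × X2 × Y1 → ℝ) : ℝ :=
  ∑ z, P z * Real.log (q1 z.1 z.2.1 z.2.2)

lemma logLik_midpoint :
    logLik q1 (fun z => (P z + P' z) / 2) = (logLik q1 P + logLik q1 P') / 2 := by
  simp only [logLik, add_div, add_mul, sum_add_distrib, div_mul_eq_mul_div, sum_div]

lemma gFun_one_half (q1 : X1 → X2 → Y1 → ℝ) (P P' : X1 × X2 × Y1 → ℝ) :
    gFun q1 1 (1 / 2) P P' = -(logLik q1 P + logLik q1 P') / 2 := by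
  rw [gFun, logLik, logLik]
  ring

variable [DecidableEq X1] [DecidableEq X2] [DecidableEq Y1]

lemma Dq_eq_entH (hq : ∀ x1 x2 y, 0 < q1 x1 x2 y) (hP : ∀ z, 0 ≤ P z) :
    Dq q1 P = entH P (fun z => (z.1, z.2.1)) - entH P id - logLik q1 P := by
  rw [Dq, sum_mul_log_div (fun _ hz => hz)
      (fun z hz => mul_ne_zero (pushf_apply_pos hP (fun w => (w.1, w.2.1)) hz).ne'
        (hq _ _ _).ne'),
    sum_mul_log_mul (fun z hz => (pushf_apply_pos hP (fun w => (w.1, w.2.1)) hz).ne')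
      (fun _ _ => (hq _ _ _).ne'), entH_id, entH_eq_sum, logLik]
  ring

lemma entH_swap_eq_entH_id :
    entH P (fun z => (z.2.1, z.1, z.2.2)) = entH P id :=
  entH_comp_of_injective (e := fun z : X1 × X2 × Y1 => (z.2.1, z.1, z.2.2))
    (fun a b h => by simp only [Prod.ext_iff] at h ⊢; tauto) id

lemma Dq_add_mutI_midpoint_le (hq : ∀ x1 x2 y, 0 < q1 x1 x2 y) (hP : ∀ z, 0 ≤ P z)
    (hP' : ∀ z, 0 ≤ P' z) (h1 : pushf P (fun z => z.1) = pushf P' (fun z => z.1))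
    (h2 : pushf P (fun z => z.2.1) = pushf P' (fun z => z.2.1)) :
    Dq q1 (fun z => (P z + P' z) / 2)
        + mutI (fun z => (P z + P' z) / 2) (fun z => z.1) (fun z => z.2.1)
      ≤ (Dq q1 P + mutI P (fun z => z.1) (fun z => z.2.1)
        + (Dq q1 P' + mutI P' (fun z => z.1) (fun z => z.2.1))) / 2 := by
  have hM : ∀ z, 0 ≤ (P z + P' z) / 2 := fun z => by linarith [hP z, hP' z]
  rw [Dq_eq_entH hq hM, Dq_eq_entH hq hP, Dq_eq_entH hq hP', mutI_eq_entH hM, mutI_eq_entH hP,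
    mutI_eq_entH hP', entH_midpoint_of_pushf_eq h1, entH_midpoint_of_pushf_eq h2,
    entH_eq_of_pushf_eq h1, entH_eq_of_pushf_eq h2, logLik_midpoint]
  linarith [entH_midpoint_ge hP hP' id]

variable (q1) in
noncomputable def lowerF1 (R2 : ℝ) (P : X1 × X2 × Y1 → ℝ) : ℝ :=
  Dq q1 P + mutI P (fun z => z.1) (fun z => z.2.1) + mutI P (fun z => z.1) (fun z => z.2.2)
    + max (mutI P (fun z => z.2.1) (fun z => (z.1, z.2.2)) - R2) 0

variable (q1) in
noncomputable def lowerF2 (P : X1 × X2 × Y1 → ℝ) : ℝ :=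
  Dq q1 P + mutI P (fun z => z.1) (fun z => z.2.1)
    + mutI P (fun z => z.1) (fun z => (z.2.1, z.2.2))

lemma avg_lowerF1_le_add_f1Fun (hq : ∀ x1 x2 y, 0 < q1 x1 x2 y) {Q1 : X1 → ℝ}
    {Q2 : X2 → ℝ} (hPP : (P, P') ∈ S1set Y1 Q1 Q2) (R2 : ℝ) :
    (lowerF1 q1 R2 P + lowerF1 q1 R2 P') / 2 ≤ R2 + f1Fun q1 R2 1 (1 / 2) P P' := by
  simp only [S1set, Set.mem_ofPred_eq] at hPP
  obtain ⟨hP, hP', h3, hm1, hm1', hm2, hm2'⟩ := hPP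
  set a := mutI P (fun z => z.2.1) (fun z => (z.1, z.2.2)) - R2
  set b := mutI P' (fun z => z.2.1) (fun z => (z.1, z.2.2)) - R2
  have hmax_a : (a + max a 0) / 2 ≤ max a ((1 - 1 * (1 / 2)) * a) :=
    add_max_zero_div_two_le (le_max_left _ _) (le_max_of_le_right (le_of_eq (by ring)))
  have hmax_b : (b + max b 0) / 2
      ≤ max (max ((1 - 1) * mutI P' (fun z => z.2.1) (fun z => z.2.2)
        + 1 * mutI P' (fun z => z.2.1) (fun z => (z.1, z.2.2)) - R2) (1 * b)) (1 * (1 / 2) * b) :=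
    add_max_zero_div_two_le (le_max_of_le_left (le_max_of_le_right (le_of_eq (by ring))))
      (le_max_of_le_right (le_of_eq (by ring)))
  have e1 := entH_eq_of_pushf_eq (f := fun z : X1 × X2 × Y1 => z.1) (hm1.trans hm1'.symm)
  have e2 := entH_eq_of_pushf_eq (f := fun z : X1 × X2 × Y1 => z.2.1) (hm2.trans hm2'.symm)
  have e3 := entH_eq_of_pushf_eq h3
  rw [lowerF1, lowerF1, f1Fun, gFun_one_half]
  linarith [Dq_eq_entH hq hP.1, Dq_eq_entH hq hP'.1,
    mutI_eq_entH hP.1 (fun z => z.1) (fun z => z.2.1),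
    mutI_eq_entH hP'.1 (fun z => z.1) (fun z => z.2.1),
    mutI_eq_entH hP.1 (fun z => z.1) (fun z => z.2.2),
    mutI_eq_entH hP'.1 (fun z => z.1) (fun z => z.2.2),
    mutI_eq_entH hP.1 (fun z => z.2.1) (fun z => (z.1, z.2.2)),
    mutI_eq_entH hP'.1 (fun z => z.2.1) (fun z => (z.1, z.2.2)),
    condEnt_eq_entH hP.1 (fun z => z.1) (fun z => z.2.2),
    entH_swap_eq_entH_id (P := P), entH_swap_eq_entH_id (P := P')]

lemma add_f2Fun_eq_avg_lowerF2 (hq : ∀ x1 x2 y, 0 < q1 x1 x2 y) {Q1 : X1 → ℝ}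
    {Q2 : X2 → ℝ} {R2 : ℝ} (hPP : (P, P') ∈ S2set Y1 Q1 Q2 R2) :
    R2 + f2Fun q1 R2 1 (1 / 2) P P' = (lowerF2 q1 P + lowerF2 q1 P') / 2 := by
  simp only [S2set, Set.mem_ofPred_eq] at hPP
  obtain ⟨hP, hP', hm1, hm1', hm2, hm2', -, h23⟩ := hPP
  have e1 := entH_eq_of_pushf_eq (f := fun z : X1 × X2 × Y1 => z.1) (hm1.trans hm1'.symm)
  have e2 := entH_eq_of_pushf_eq (f := fun z : X1 × X2 × Y1 => z.2.1) (hm2.trans hm2'.symm)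
  have e23 := entH_eq_of_pushf_eq h23
  have eP : entH P (fun z => (z.1, z.2.1, z.2.2)) = entH P id := rfl
  have eP' : entH P' (fun z => (z.1, z.2.1, z.2.2)) = entH P' id := rfl
  rw [lowerF2, lowerF2, f2Fun, gFun_one_half]
  linarith [Dq_eq_entH hq hP.1, Dq_eq_entH hq hP'.1,
    mutI_eq_entH hP.1 (fun z => z.1) (fun z => z.2.1),
    mutI_eq_entH hP'.1 (fun z => z.1) (fun z => z.2.1),
    mutI_eq_entH hP.1 (fun z => z.1) (fun z => (z.2.1, z.2.2)),
    mutI_eq_entH hP'.1 (fun z => z.1) (fun z => (z.2.1, z.2.2)),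
    mutI_eq_entH hP.1 (fun z => z.2.1) (fun z => (z.1, z.2.2)),
    condEnt_eq_entH hP.1 (fun z => z.1) (fun z => z.2.2),
    entH_swap_eq_entH_id (P := P)]

lemma EB1_le_avg_lowerF1 (hq : ∀ x1 x2 y, 0 < q1 x1 x2 y) {Q1 : X1 → ℝ} {Q2 : X2 → ℝ}
    (hPP : (P, P') ∈ S1set Y1 Q1 Q2) (R2 : ℝ) :
    EB1 q1 Q1 Q2 0 R2 ≤ (((lowerF1 q1 R2 P + lowerF1 q1 R2 P') / 2 : ℝ) : EReal) := by
  simp only [S1set, Set.mem_ofPred_eq] at hPP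
  obtain ⟨hP, hP', h3, hm1, hm1', hm2, hm2'⟩ := hPP
  have h1 := hm1.trans hm1'.symm
  have h2 := hm2.trans hm2'.symm
  set M : X1 × X2 × Y1 → ℝ := fun z => (P z + P' z) / 2
  have hMP : IsPMF M := hP.midpoint hP'
  have hM : M ∈ Pset Y1 Q1 Q2 :=
    ⟨hMP, (pushf_midpoint_of_eq h1).trans hm1, (pushf_midpoint_of_eq h2).trans hm2⟩
  have hDI := Dq_add_mutI_midpoint_le hq hP.1 hP'.1 h1 h2
  have hI13 := mutI_midpoint_le hP.1 hP'.1 h1 h3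
  have hI13M := mutI_nonneg hMP (fun z => z.1) (fun z => z.2.2)
  have hI13P := mutI_nonneg hP (fun z => z.1) (fun z => z.2.2)
  have hI13P' := mutI_nonneg hP' (fun z => z.1) (fun z => z.2.2)
  have ha := le_max_right (mutI P (fun z => z.2.1) (fun z => (z.1, z.2.2)) - R2) 0
  have hb := le_max_right (mutI P' (fun z => z.2.1) (fun z => (z.1, z.2.2)) - R2) 0
  refine max_le ((iInf_le _ ⟨M, hM⟩).trans (EReal.coe_le_coe_iff.2 ?_))
    (min_le_of_left_le ((iInf_le _ ⟨M, hM⟩).trans (EReal.coe_le_coe_iff.2 ?_)))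
  · rw [sub_zero, max_eq_left hI13M, lowerF1, lowerF1]
    linarith
  · have hsum := mutI_add_mutI_pair_midpoint_le hP.1 hP'.1 h1 h2 h3
    have hmax : max (mutI M (fun z => z.1) (fun z => z.2.2)
          + mutI M (fun z => z.2.1) (fun z => (z.1, z.2.2)) - 0 - R2) 0
        ≤ (mutI P (fun z => z.1) (fun z => z.2.2)
          + max (mutI P (fun z => z.2.1) (fun z => (z.1, z.2.2)) - R2) 0
          + (mutI P' (fun z => z.1) (fun z => z.2.2)
          + max (mutI P' (fun z => z.2.1) (fun z => (z.1, z.2.2)) - R2) 0)) / 2 :=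
      max_le (by linarith [le_max_left (mutI P (fun z => z.2.1) (fun z => (z.1, z.2.2)) - R2) 0,
        le_max_left (mutI P' (fun z => z.2.1) (fun z => (z.1, z.2.2)) - R2) 0]) (by linarith)
    dsimp only
    rw [lowerF1, lowerF1]
    linarith

lemma EB1_le_avg_lowerF2 (hq : ∀ x1 x2 y, 0 < q1 x1 x2 y) {Q1 : X1 → ℝ} {Q2 : X2 → ℝ}
    {R2 : ℝ} (hPP : (P, P') ∈ S2set Y1 Q1 Q2 R2) :
    EB1 q1 Q1 Q2 0 R2 ≤ (((lowerF2 q1 P + lowerF2 q1 P') / 2 : ℝ) : EReal) := by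
  simp only [S2set, Set.mem_ofPred_eq] at hPP
  obtain ⟨hP, hP', hm1, hm1', hm2, hm2', -, h23⟩ := hPP
  have h1 := hm1.trans hm1'.symm
  have h2 := hm2.trans hm2'.symm
  set M : X1 × X2 × Y1 → ℝ := fun z => (P z + P' z) / 2
  have hMP : IsPMF M := hP.midpoint hP'
  have hM : M ∈ Pset Y1 Q1 Q2 :=
    ⟨hMP, (pushf_midpoint_of_eq h1).trans hm1, (pushf_midpoint_of_eq h2).trans hm2⟩
  have hDI := Dq_add_mutI_midpoint_le hq hP.1 hP'.1 h1 h2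
  have hI := mutI_midpoint_le hP.1 hP'.1 h1 h23
  have hmono := mutI_le_mutI_pair hMP.1 (fun z => z.1) (fun z => z.2.1) (fun z => z.2.2)
  refine max_le ((iInf_le _ ⟨M, hM⟩).trans (EReal.coe_le_coe_iff.2 ?_))
    (min_le_of_right_le ((iInf_le _ ⟨M, hM⟩).trans (EReal.coe_le_coe_iff.2 ?_)))
  · rw [sub_zero, max_eq_left (mutI_nonneg hMP _ _), lowerF2, lowerF2]
    linarith
  · rw [sub_zero, max_eq_left (mutI_nonneg hMP _ _), lowerF2, lowerF2]
    linarith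

end Channel

lemma EReal.le_coe_add_iInf {ι : Sort*} {x : EReal} {r : ℝ} {f : ι → EReal}
    (h : ∀ i, x ≤ r + f i) : x ≤ r + ⨅ i, f i := by
  have hsub : x - r ≤ ⨅ i, f i :=
    le_iInf fun i => EReal.sub_le_of_le_add (by rw [add_comm]; exact h i)
  rw [add_comm]
  exact (EReal.sub_le_iff_le_add (.inl (EReal.coe_ne_bot r)) (.inl (EReal.coe_ne_top r))).1 hsub

theorem stmt17_general {X1 X2 Y1 : Type*} [Fintype X1] [DecidableEq X1] [Fintype X2] [DecidableEq X2]
    [Fintype Y1] [DecidableEq Y1]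
    (q1 : X1 → X2 → Y1 → ℝ) (hq_pos : ∀ x1 x2 y, 0 < q1 x1 x2 y)
    (R2 : ℝ) (Q1 : X1 → ℝ) (Q2 : X2 → ℝ) :
    EB1 q1 Q1 Q2 0 R2
      ≤ ⨆ ρ : Set.Icc (0 : ℝ) 1, ⨆ lam : Set.Icc (0 : ℝ) 1,
          ER1 q1 0 R2 Q1 Q2 (ρ : ℝ) (lam : ℝ) := by
  refine le_iSup₂_of_le (⟨1, by norm_num⟩ : Set.Icc (0 : ℝ) 1)
    (⟨1 / 2, by norm_num⟩ : Set.Icc (0 : ℝ) 1) ?_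
  rw [ER1, mul_zero, sub_zero, ← min_add_add_left]
  refine le_min (EReal.le_coe_add_iInf ?_) (EReal.le_coe_add_iInf ?_)
  · rintro ⟨⟨P, P'⟩, hPP⟩
    rw [← EReal.coe_add]
    exact (EB1_le_avg_lowerF1 hq_pos hPP R2).trans
      (EReal.coe_le_coe_iff.2 (avg_lowerF1_le_add_f1Fun hq_pos hPP R2))
  · rintro ⟨⟨P, P'⟩, hPP⟩
    rw [← EReal.coe_add, add_f2Fun_eq_avg_lowerF2 hq_pos hPP]
    exact EB1_le_avg_lowerF2 hq_pos hPP

/-- at `R1 = 0` the benchmark exponent is dominated by the optimized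
new exponent. -/
theorem stmt17 {X1 X2 Y1 : Type*} [Fintype X1] [DecidableEq X1] [Fintype X2] [DecidableEq X2]
    [Fintype Y1] [DecidableEq Y1]
    (q1 : X1 → X2 → Y1 → ℝ) (hq_pos : ∀ x1 x2 y, 0 < q1 x1 x2 y)
    (hq_sum : ∀ x1 x2, ∑ y, q1 x1 x2 y = 1)
    (R2 : ℝ) (hR2 : 0 ≤ R2) (Q1 : X1 → ℝ) (Q2 : X2 → ℝ) (hQ1 : IsPMF Q1) (hQ2 : IsPMF Q2) :
    EB1 q1 Q1 Q2 0 R2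
      ≤ ⨆ ρ : Set.Icc (0 : ℝ) 1, ⨆ lam : Set.Icc (0 : ℝ) 1,
          ER1 q1 0 R2 Q1 Q2 (ρ : ℝ) (lam : ℝ) :=
  stmt17_general q1 hq_pos R2 Q1 Q2
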